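/- If n = p^m is a power of an odd prime p (with m ≥ 1), then the independence number of the 2-derangement graph satisfies α(Γ_{2,n}) = 2·(n−2)!. -/

import Mathlib

/-
The setwise stabiliser of a 2-set is a subgroup of `S_n` of order `2 (n-2)!`; the quotient of two
of its elements preserves that 2-set, so it is independent in `Γ_{2,n}`.

For the upper bound identify `{1, …, n}` with the field `F` of order `n`. Let `A` be a set of
representatives of `Fˣ / {±1}`. The `n (n-1) / 2` affine maps `x ↦ a x + b` with `a ∈ A` form a
clique: the quotient of two of them is affine, not the identity, with slope `≠ -1`, and such a map
neither fixes nor swaps two points. In a Cayley graph a clique `C` and an independent set `I`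
satisfy `|C| |I| ≤ |G|`, since `(c, i) ↦ c i` is injective on `C × I`; hence
`α(Γ_{2,n}) ≤ 2 n! / (n (n-1)) = 2 (n-2)!`.
-/

def IsKDerangement (n k : ℕ) (σ : Equiv.Perm (Fin n)) : Prop :=
  ∀ X : Finset (Fin n), X.card = k → X.image σ ≠ X

lemma IsKDerangement.inv {n k : ℕ} {σ : Equiv.Perm (Fin n)}
    (h : IsKDerangement n k σ) : IsKDerangement n k σ⁻¹ := by
  intro X hX hfix
  refine h X hX ?_
  nth_rewrite 1 [← hfix]
  rw [Finset.image_image]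
  simp [Function.comp_def]

def derangementGraph (n k : ℕ) : SimpleGraph (Equiv.Perm (Fin n)) where
  Adj σ τ := σ ≠ τ ∧ IsKDerangement n k (σ * τ⁻¹)
  symm := ⟨by
    rintro σ τ ⟨hne, h⟩
    exact ⟨hne.symm, by simpa [mul_inv_rev] using h.inv⟩⟩
  loopless := ⟨by rintro σ ⟨hne, -⟩; exact hne rfl⟩

noncomputable def numKDerangements (n k : ℕ) : ℕ :=
  Nat.card {σ : Equiv.Perm (Fin n) // IsKDerangement n k σ}

noncomputable def indepNum {V : Type*} (G : SimpleGraph V) : ℕ :=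
  sSup {m | ∃ s : Finset V, (∀ a ∈ s, ∀ b ∈ s, a ≠ b → ¬ G.Adj a b) ∧ s.card = m}

open Finset Equiv MulAction
open scoped Pointwise Nat

theorem card_mul_card_le_card_of_pairwise {G : Type*} [Group G] [Fintype G] (D : G → Prop)
    {C I : Finset G} (hC : (C : Set G).Pairwise fun c c' => D (c'⁻¹ * c))
    (hI : (I : Set G).Pairwise fun i i' => ¬ D (i * i'⁻¹)) :
    #C * #I ≤ Fintype.card G := by
  rw [← card_product, ← card_univ]
  refine card_le_card_of_injOn (fun x => x.1 * x.2) (fun _ _ => mem_coe.2 (mem_univ _)) ?_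
  rintro ⟨c, i⟩ hci ⟨c', i'⟩ hci' (h : c * i = c' * i')
  simp only [coe_product, Set.mem_prod, mem_coe] at hci hci'
  obtain rfl | hii' := eq_or_ne i i'
  · rw [mul_right_cancel h]
  · have hcc' : c ≠ c' := by rintro rfl; exact hii' (mul_left_cancel h)
    have hquot : c'⁻¹ * c = i' * i⁻¹ := by
      rw [inv_mul_eq_iff_eq_mul, ← mul_assoc, ← h, mul_inv_cancel_right]
    exact absurd (hquot ▸ hC hci.1 hci'.1 hcc') (hI hci'.2 hci.2 hii'.symm)

theorem Function.Involutive.exists_two_mul_card_eq {α : Type*} [Fintype α] {f : α → α}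
    (hf : Function.Involutive f) (hfix : ∀ a, f a ≠ a) :
    ∃ A : Finset α, 2 * #A = Fintype.card α ∧ ∀ a ∈ A, f a ∉ A := by
  classical
  let e := Fintype.equivFin α
  let A : Finset α := {a | e a < e (f a)}
  have hcompl : Aᶜ = A.image f := by
    ext a
    have hne : e (f a) ≠ e a := e.injective.ne (hfix a)
    simp only [A, mem_compl, mem_filter, mem_univ, true_and, mem_image, not_lt]
    refine ⟨fun h => ⟨f a, by rw [hf a]; exact lt_of_le_of_ne h hne, hf a⟩, ?_⟩
    rintro ⟨b, hb, rfl⟩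
    rw [hf b]
    exact hb.le
  refine ⟨A, ?_, fun a ha hfa => ?_⟩
  · rw [← card_add_card_compl A, hcompl, card_image_of_injective _ hf.injective, two_mul]
  · simp only [A, mem_filter, mem_univ, true_and, hf a] at ha hfa
    exact lt_asymm ha hfa

theorem indepNum_eq_of_isIndepSet {V : Type*} {G : SimpleGraph V} {k : ℕ} (s : Finset V)
    (hs : G.IsIndepSet s) (hcard : #s = k) (hle : ∀ t : Finset V, G.IsIndepSet t → #t ≤ k) :
    indepNum G = k := by
  have hmem : k ∈ {m | ∃ s : Finset V, (∀ a ∈ s, ∀ b ∈ s, a ≠ b → ¬ G.Adj a b) ∧ #s = m} :=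
    ⟨s, fun a ha b hb => hs ha hb, hcard⟩
  refine le_antisymm (csSup_le ⟨k, hmem⟩ ?_) (le_csSup ⟨k, ?_⟩ hmem) <;>
    rintro _ ⟨t, ht, rfl⟩ <;> exact hle t fun a ha b hb => ht a ha b hb

theorem Equiv.Perm.smul_finset_eq_self_iff {α : Type*} [DecidableEq α] {σ : Perm α}
    {s : Finset α} : σ • s = s ↔ ∀ a, σ a ∈ s ↔ a ∈ s := by
  rw [smul_finset_def, Finset.ext_iff]
  simp only [mem_image, Perm.smul_def]
  refine ⟨fun h a => ⟨fun ha => ?_, fun ha => (h _).1 ⟨a, ha, rfl⟩⟩,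
    fun h b => ⟨?_, fun hb => ?_⟩⟩
  · obtain ⟨b, hb, hba⟩ := (h _).2 ha
    rwa [← σ.injective hba]
  · rintro ⟨a, ha, rfl⟩
    exact (h a).2 ha
  · exact ⟨σ⁻¹ b, (h _).1 (by simpa using hb), by simp⟩

theorem Equiv.Perm.card_stabilizer_finset {α : Type*} [Fintype α] [DecidableEq α]
    (s : Finset α) :
    Nat.card (stabilizer (Perm α) s) = (#s)! * (Fintype.card α - #s)! := by
  have hstab : ∀ σ : Perm α, σ ∈ stabilizer (Perm α) s ↔
      (fun a => decide (a ∈ s)) ∘ σ = fun a => decide (a ∈ s) := by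
    intro σ
    rw [mem_stabilizer_iff, Perm.smul_finset_eq_self_iff, funext_iff]
    simp
  rw [Nat.card_congr (Equiv.subtypeEquivRight hstab), Nat.card_eq_fintype_card,
    DomMulAct.stabilizer_card, Fintype.prod_bool]
  simp [Fintype.card_subtype, filter_notMem_eq_sdiff, card_sdiff_of_subset (subset_univ s)]

theorem derangementGraph_isIndepSet_iff {n k : ℕ} {s : Set (Perm (Fin n))} :
    (derangementGraph n k).IsIndepSet s ↔
      s.Pairwise fun σ τ => ¬ IsKDerangement n k (σ * τ⁻¹) := by
  simp +contextual [SimpleGraph.IsIndepSet, Set.Pairwise, derangementGraph]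

theorem derangementGraph_isIndepSet_stabilizer {n k : ℕ} {P : Finset (Fin n)} (hP : #P = k) :
    (derangementGraph n k).IsIndepSet (stabilizer (Perm (Fin n)) P : Set (Perm (Fin n))) := by
  rw [derangementGraph_isIndepSet_iff]
  intro σ hσ τ hτ _ hder
  have hστ : σ * τ⁻¹ ∈ stabilizer (Perm (Fin n)) P := mul_mem hσ (inv_mem hτ)
  exact hder P hP (mem_stabilizer_iff.mp hστ)

section Affine

variable {F : Type*} [Field F]

def affinePerm (a : Fˣ) (b : F) : Perm F := Equiv.addRight b * Units.mulLeft a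

@[simp] theorem affinePerm_apply (a : Fˣ) (b x : F) : affinePerm a b x = a * x + b := rfl

theorem affinePerm_inv_mul (a c : Fˣ) (b d : F) :
    (affinePerm c d)⁻¹ * affinePerm a b = affinePerm (c⁻¹ * a) (c⁻¹ * (b - d) : F) := by
  rw [inv_mul_eq_iff_eq_mul]
  ext x
  simp only [Perm.mul_apply, affinePerm_apply, Units.val_mul]
  linear_combination (d - b - a * x) * c.mul_inv

theorem affinePerm_injective : Function.Injective fun p : Fˣ × F => affinePerm p.1 p.2 := by
  rintro ⟨a, b⟩ ⟨c, d⟩ h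
  have hb : b = d := by simpa using congr($h 0)
  have ha : (a : F) = c := by simpa [hb] using congr($h 1)
  rw [Units.ext ha, hb]

theorem image_affinePerm_ne_self [DecidableEq F] {a : Fˣ} {b : F} (ha : (a : F) ≠ -1)
    (hab : affinePerm a b ≠ 1) {X : Finset F} (hX : #X = 2) : X.image (affinePerm a b) ≠ X := by
  obtain ⟨x, y, hxy, rfl⟩ := card_eq_two.mp hX
  intro h
  have hx : a * x + b ∈ ({x, y} : Finset F) := h ▸ mem_image_of_mem _ (by simp)
  have hy : a * y + b ∈ ({x, y} : Finset F) := h ▸ mem_image_of_mem _ (by simp)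
  have hxy' : (x - y : F) ≠ 0 := sub_ne_zero.mpr hxy
  simp only [mem_insert, mem_singleton] at hx hy
  rcases hx with hx | hx <;> rcases hy with hy | hy
  · exact hxy ((affinePerm a b).injective (hx.trans hy.symm))
  · have ha1 : (a : F) = 1 := mul_right_cancel₀ hxy' (by linear_combination hx - hy)
    refine hab (Equiv.ext fun z => ?_)
    simp only [affinePerm_apply, ha1, Perm.one_apply]
    linear_combination hx - ha1 * x
  · exact ha (mul_right_cancel₀ hxy' (by linear_combination hx - hy))
  · exact hxy ((affinePerm a b).injective (hx.trans hy.symm))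

end Affine

theorem isKDerangement_permCongrHom {α : Type*} [DecidableEq α] {n k : ℕ} (e : α ≃ Fin n)
    {σ : Perm α} (hσ : ∀ X : Finset α, #X = k → X.image σ ≠ X) :
    IsKDerangement n k (e.permCongrHom σ) := by
  intro X hX hfix
  refine hσ (X.image e.symm) (by rw [card_image_of_injective _ e.symm.injective, hX]) ?_
  have hcomm : σ ∘ e.symm = e.symm ∘ e.permCongrHom σ := by
    ext x
    simp [permCongr_apply]
  rw [image_image, hcomm, ← image_image, hfix]

theorem exists_pairwise_isKDerangement_two {F : Type*} [Field F] [Fintype F]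
    (hF : ringChar F ≠ 2) {n : ℕ} (e : F ≃ Fin n) :
    ∃ C : Finset (Perm (Fin n)), 2 * #C = n * (n - 1) ∧
      (C : Set (Perm (Fin n))).Pairwise fun σ τ => IsKDerangement n 2 (τ⁻¹ * σ) := by
  classical
  have hneg : ∀ a : Fˣ, -a ≠ a := fun a h =>
    a.ne_zero ((Ring.eq_self_iff_eq_zero_of_char_ne_two hF).mp congr(Units.val $h))
  -- `A` contains one of `±a` for each unit `a`, so no quotient of two of its elements is `-1`
  obtain ⟨A, hA, hAneg⟩ := neg_involutive.exists_two_mul_card_eq hneg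
  let Φ : Fˣ × F → Perm (Fin n) := fun p => e.permCongrHom (affinePerm p.1 p.2)
  have hcard : Fintype.card F = n := by rw [Fintype.card_congr e, Fintype.card_fin]
  refine ⟨(A ×ˢ univ).image Φ, ?_, ?_⟩
  · rw [card_image_of_injective (f := Φ) _ (e.permCongrHom.injective.comp affinePerm_injective),
      card_product, card_univ, ← mul_assoc, hA, Fintype.card_units, hcard, mul_comm]
  · simp only [coe_image, coe_product, coe_univ, Set.prod_univ]
    rintro _ ⟨⟨a, b⟩, ha, rfl⟩ _ ⟨⟨c, d⟩, hc, rfl⟩ hne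
    simp only [Set.mem_preimage, mem_coe] at ha hc
    rw [← map_inv, ← map_mul]
    refine isKDerangement_permCongrHom e fun X hX => ?_
    have hne_one : (affinePerm c d)⁻¹ * affinePerm a b ≠ 1 :=
      fun h => hne (by simp only [Φ, inv_mul_eq_one.mp h])
    rw [affinePerm_inv_mul] at hne_one ⊢
    refine image_affinePerm_ne_self (fun hslope => hAneg c hc ?_) hne_one hX
    have : c⁻¹ * a = -1 := Units.ext (by simpa using hslope)
    rwa [← mul_neg_one c, ← inv_mul_eq_iff_eq_mul.mp this]

theorem card_le_of_derangementGraph_isIndepSet_two {F : Type*} [Field F] [Fintype F]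
    (hF : ringChar F ≠ 2) {n : ℕ} (e : F ≃ Fin n) {t : Finset (Perm (Fin n))}
    (ht : (derangementGraph n 2).IsIndepSet t) : #t ≤ 2 * (n - 2)! := by
  obtain ⟨C, hC, hCpair⟩ := exists_pairwise_isKDerangement_two hF e
  have hCt := card_mul_card_le_card_of_pairwise _ hCpair (derangementGraph_isIndepSet_iff.1 ht)
  rw [Fintype.card_perm, Fintype.card_fin] at hCt
  have hn : 1 < n := by simpa [Fintype.card_congr e] using Fintype.one_lt_card (α := F)
  obtain ⟨k, rfl⟩ : ∃ k, n = k + 2 := ⟨n - 2, by omega⟩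
  rw [Nat.add_sub_cancel]
  refine Nat.le_of_mul_le_mul_left (?_ : (k + 2) * (k + 1) * #t ≤ _) (by positivity)
  calc (k + 2) * (k + 1) * #t = 2 * (#C * #t) := by rw [← mul_assoc, hC]; rfl
    _ ≤ 2 * (k + 2)! := Nat.mul_le_mul_left 2 hCt
    _ = (k + 2) * (k + 1) * (2 * k !) := by rw [Nat.factorial_succ, Nat.factorial_succ]; ring

/-- If `n = p^m` is a power of an odd prime, then the independence number of the
`2`-derangement graph equals `2·(n-2)!`. -/
theorem indepNum_derangementGraph_two (n p m : ℕ) (hp : p.Prime) (hodd : Odd p)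
    (hm : 1 ≤ m) (hn : n = p ^ m) :
    indepNum (derangementGraph n 2) = 2 * (n - 2).factorial := by
  have : Fact p.Prime := ⟨hp⟩
  let F := GaloisField p m
  let : Fintype F := Fintype.ofFinite F
  have hcardF : Fintype.card F = n := by
    rw [← Nat.card_eq_fintype_card, GaloisField.card p m (by omega), hn]
  have hcharF : ringChar F ≠ 2 := by
    rw [ringChar.eq F p]
    rintro rfl
    exact Nat.not_odd_iff_even.mpr even_two hodd
  have h2n : 2 ≤ n := hn ▸ (hp.two_le.trans (Nat.le_self_pow (by omega) p))
  obtain ⟨P, -, hP⟩ := exists_subset_card_eq (s := (univ : Finset (Fin n))) (by simpa using h2n)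
  classical
  refine indepNum_eq_of_isIndepSet (stabilizer (Perm (Fin n)) P : Set (Perm (Fin n))).toFinset
    (by simpa using derangementGraph_isIndepSet_stabilizer hP) ?_
    fun t => card_le_of_derangementGraph_isIndepSet_two hcharF (Fintype.equivFinOfCardEq hcardF)
  rw [Set.toFinset_card, ← Nat.card_eq_fintype_card, SetLike.coe_sort_coe,
    Perm.card_stabilizer_finset, hP, Fintype.card_fin, Nat.factorial_two, mul_comm]
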